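/- Let m, n ∈ ℕ and let p be a monic polynomial of degree m with complex coefficients satisfying I_0(x^k p(x) e^{−x³}) + I_2(x^k p(x) e^{−x³}) = 0 for all 0 ≤ k ≤ m−1. Then I_0(x^k Q_n[p](x) e^{−x³}) + I_2(x^k Q_n[p](x) e^{−x³}) = 0 for all 0 ≤ k ≤ n+m−1. (Together with the degree and monicity of Q_n[p] and its orthogonality on Γ_0 ∪ Γ_1, this is the Rodrigues formula: Q_n[p] is the type II multiple orthogonal polynomial P_{n,n+m} for the exponential cubic weight.) -/

import Mathlib

/-- The primitive third root of unity `ω = exp(2πi/3)`. -/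
noncomputable def ω : ℂ := Complex.exp (2 * Real.pi * Complex.I / 3)

/-- Integral over the ray `Γ₀ = [0,∞)`. -/
noncomputable def I0 (f : ℂ → ℂ) : ℂ := ∫ t in Set.Ioi (0 : ℝ), f t

/-- Integral over the ray `Γ₁ = ω·[0,∞)`, oriented towards the origin. -/
noncomputable def I1 (f : ℂ → ℂ) : ℂ := -ω * ∫ t in Set.Ioi (0 : ℝ), f (ω * t)

/-- Integral over the ray `Γ₂ = ω²·[0,∞)`, oriented towards the origin. -/
noncomputable def I2 (f : ℂ → ℂ) : ℂ := -ω ^ 2 * ∫ t in Set.Ioi (0 : ℝ), f (ω ^ 2 * t)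

/-- `Q n p x = (−1)ⁿ 3⁻ⁿ e^{x³} (d/dx)ⁿ (e^{−x³} p(x))`. -/
noncomputable def Q (n : ℕ) (p : Polynomial ℂ) : ℂ → ℂ := fun x =>
  (-1) ^ n / 3 ^ n * Complex.exp (x ^ 3) *
    iteratedDeriv n (fun z => Complex.exp (-z ^ 3) * p.eval z) x

/-!
With `D r := r' − 3x² r = e^{x³} (e^{−x³} r)'` one has `Qₙ[p] = (−1/3)ⁿ Dⁿ p`. The functional
`Λ s := (I₀ + I₂)(s(x) e^{−x³})` kills the image of `D`: on each ray `e^{−x³} r(x)` decays at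
infinity, so both integrals reduce to the boundary value `r(0)`, with opposite signs because `Γ₀`
leaves the origin and `Γ₂` enters it. Since `D (xᵏ⁺¹ r) = xᵏ⁺¹ D r + (k+1) xᵏ r`, this gives
`Λ (xᵏ⁺¹ D r) = −(k+1) Λ (xᵏ r)`, so each application of `D` extends the range of orthogonality
by one.
-/

open MeasureTheory Polynomial Filter Set

lemma ω_pow_three : ω ^ 3 = 1 := by
  rw [ω, ← Complex.exp_nat_mul,
    show ((3 : ℕ) : ℂ) * (2 * Real.pi * Complex.I / 3) = 2 * Real.pi * Complex.I by push_cast; ring]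
  exact Complex.exp_two_pi_mul_I

lemma ω_sq_pow_three : (ω ^ 2) ^ 3 = 1 := by
  rw [← pow_mul, mul_comm, pow_mul, ω_pow_three, one_pow]

lemma integrableOn_pow_mul_cexp_neg_pow_three (n : ℕ) :
    IntegrableOn (fun t : ℝ => (t : ℂ) ^ n * Complex.exp (-(t : ℂ) ^ 3)) (Ioi 0) := by
  have hreal : IntegrableOn (fun t : ℝ => t ^ n * Real.exp (-t ^ 3)) (Ioi 0) := by
    simpa using integrableOn_rpow_mul_exp_neg_rpow (s := n) (p := 3)
      (by linarith [(n.cast_nonneg : (0 : ℝ) ≤ n)]) (by norm_num)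
  have hcomplex : IntegrableOn (fun t : ℝ => ((t ^ n * Real.exp (-t ^ 3) : ℝ) : ℂ)) (Ioi 0) :=
    hreal.ofReal
  refine hcomplex.congr_fun (fun t _ => ?_) measurableSet_Ioi
  push_cast
  rfl

lemma integrableOn_cexp_neg_pow_three_mul_eval (s : ℂ[X]) :
    IntegrableOn (fun t : ℝ => Complex.exp (-(t : ℂ) ^ 3) * s.eval (t : ℂ)) (Ioi 0) := by
  induction s using Polynomial.induction_on' with
  | add p q hp hq =>
    simp only [eval_add, mul_add]
    exact hp.add hq
  | monomial n a =>
    refine IntegrableOn.congr_fun ((integrableOn_pow_mul_cexp_neg_pow_three n).const_mul a)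
      (fun t _ => ?_) measurableSet_Ioi
    simp only [eval_monomial]
    ring

lemma integrableOn_cexp_neg_pow_three_mul_eval_ray {c : ℂ} (hc : c ^ 3 = 1) (s : ℂ[X]) :
    IntegrableOn (fun t : ℝ => Complex.exp (-(c * t) ^ 3) * s.eval (c * t)) (Ioi 0) := by
  refine (integrableOn_cexp_neg_pow_three_mul_eval (s.comp (C c * X))).congr_fun
    (fun t _ => ?_) measurableSet_Ioi
  simp only [eval_comp, eval_mul, eval_C, eval_X, mul_pow, hc, one_mul]

/-- `rodriguesStep r = e^{x³} (e^{−x³} r)'`. -/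
noncomputable def rodriguesStep (r : ℂ[X]) : ℂ[X] := derivative r - C 3 * X ^ 2 * r

lemma hasDerivAt_cexp_neg_pow_three_mul_eval (r : ℂ[X]) (z : ℂ) :
    HasDerivAt (fun z : ℂ => Complex.exp (-z ^ 3) * r.eval z)
      (Complex.exp (-z ^ 3) * (rodriguesStep r).eval z) z := by
  have hexp : HasDerivAt (fun z : ℂ => Complex.exp (-z ^ 3))
      (Complex.exp (-z ^ 3) * -(3 * z ^ 2)) z := by
    simpa using (hasDerivAt_pow 3 z).neg.cexp
  refine (hexp.mul (r.hasDerivAt z)).congr_deriv ?_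
  simp only [rodriguesStep, eval_sub, eval_mul, eval_C, eval_pow, eval_X]
  ring

lemma iteratedDeriv_cexp_neg_pow_three_mul_eval (p : ℂ[X]) (j : ℕ) :
    iteratedDeriv j (fun z : ℂ => Complex.exp (-z ^ 3) * p.eval z) =
      fun z => Complex.exp (-z ^ 3) * (rodriguesStep^[j] p).eval z := by
  induction j with
  | zero => simp
  | succ j ih =>
    rw [iteratedDeriv_succ, ih, Function.iterate_succ_apply']
    funext z
    exact (hasDerivAt_cexp_neg_pow_three_mul_eval _ z).deriv

lemma Q_eq_eval_rodriguesStep_iterate (n : ℕ) (p : ℂ[X]) (x : ℂ) :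
    Q n p x = (-1) ^ n / 3 ^ n * (rodriguesStep^[n] p).eval x := by
  rw [Q, iteratedDeriv_cexp_neg_pow_three_mul_eval, mul_assoc, ← mul_assoc (Complex.exp _),
    ← Complex.exp_add, add_neg_cancel, Complex.exp_zero, one_mul]

/-- `s ↦ ∫_0^∞ e^{−(ct)³} s(ct) dt`; the hypothesis `c³ = 1` makes every integrand integrable. -/
noncomputable def rayIntegral {c : ℂ} (hc : c ^ 3 = 1) : ℂ[X] →ₗ[ℂ] ℂ where
  toFun s := ∫ t in Ioi (0 : ℝ), Complex.exp (-(c * t) ^ 3) * s.eval (c * t)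
  map_add' p q := by
    simp only [eval_add, mul_add]
    exact integral_add (integrableOn_cexp_neg_pow_three_mul_eval_ray hc p)
      (integrableOn_cexp_neg_pow_three_mul_eval_ray hc q)
  map_smul' a s := by
    simp only [eval_smul, smul_eq_mul, RingHom.id_apply, mul_left_comm _ a]
    exact integral_const_mul a _

lemma rayIntegral_apply {c : ℂ} (hc : c ^ 3 = 1) (s : ℂ[X]) :
    rayIntegral hc s = ∫ t in Ioi (0 : ℝ), Complex.exp (-(c * t) ^ 3) * s.eval (c * t) := rfl

lemma mul_rayIntegral_rodriguesStep {c : ℂ} (hc : c ^ 3 = 1) (r : ℂ[X]) :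
    c * rayIntegral hc (rodriguesStep r) = -r.eval 0 := by
  have hderiv : ∀ x : ℝ, HasDerivAt (fun t : ℝ => Complex.exp (-(c * t) ^ 3) * r.eval (c * t))
      (c * (Complex.exp (-(c * x) ^ 3) * (rodriguesStep r).eval (c * x))) x := fun x => by
    have := (hasDerivAt_cexp_neg_pow_three_mul_eval r (c * x)).comp (x : ℂ)
      ((hasDerivAt_id (x : ℂ)).const_mul c)
    simpa [mul_comm] using this.comp_ofReal
  have hint := (integrableOn_cexp_neg_pow_three_mul_eval_ray hc (rodriguesStep r)).const_mul c
  have hlim : Tendsto (fun t : ℝ => Complex.exp (-(c * t) ^ 3) * r.eval (c * t)) atTop (nhds 0) :=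
    tendsto_zero_of_hasDerivAt_of_integrableOn_Ioi (fun x _ => hderiv x) hint
      (integrableOn_cexp_neg_pow_three_mul_eval_ray hc r)
  rw [rayIntegral_apply, ← integral_const_mul,
    integral_Ioi_of_hasDerivAt_of_tendsto' (fun x _ => hderiv x) hint hlim]
  simp

/-- The pairing `s ↦ ∫_{Γ₀ ∪ Γ₂} s(x) e^{−x³} dx`; the minus sign is the orientation of `Γ₂`. -/
noncomputable def weightFunctional : ℂ[X] →ₗ[ℂ] ℂ :=
  rayIntegral (one_pow 3) - ω ^ 2 • rayIntegral ω_sq_pow_three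

lemma weightFunctional_apply (s : ℂ[X]) :
    weightFunctional s = I0 (fun x => Complex.exp (-x ^ 3) * s.eval x) +
      I2 (fun x => Complex.exp (-x ^ 3) * s.eval x) := by
  simp [weightFunctional, rayIntegral_apply, I0, I2, sub_eq_add_neg]

lemma weightFunctional_rodriguesStep (r : ℂ[X]) : weightFunctional (rodriguesStep r) = 0 := by
  have h₀ := mul_rayIntegral_rodriguesStep (one_pow 3) r
  have h₂ := mul_rayIntegral_rodriguesStep ω_sq_pow_three r
  simp only [weightFunctional, LinearMap.sub_apply, LinearMap.smul_apply, smul_eq_mul]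
  linear_combination h₀ - h₂

lemma X_pow_succ_mul_rodriguesStep (k : ℕ) (r : ℂ[X]) :
    X ^ (k + 1) * rodriguesStep r =
      rodriguesStep (X ^ (k + 1) * r) - C ((k : ℂ) + 1) * X ^ k * r := by
  simp only [rodriguesStep, derivative_mul, derivative_X_pow, Nat.add_sub_cancel]
  push_cast
  ring

lemma weightFunctional_X_pow_succ_mul_rodriguesStep (k : ℕ) (r : ℂ[X]) :
    weightFunctional (X ^ (k + 1) * rodriguesStep r) =
      -((k : ℂ) + 1) * weightFunctional (X ^ k * r) := by
  rw [X_pow_succ_mul_rodriguesStep, map_sub, weightFunctional_rodriguesStep, mul_assoc, C_mul',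
    map_smul, smul_eq_mul]
  ring

lemma weightFunctional_X_pow_mul_rodriguesStep_iterate {m : ℕ} {p : ℂ[X]}
    (horth : ∀ k < m, weightFunctional (X ^ k * p) = 0) (j : ℕ) :
    ∀ k < j + m, weightFunctional (X ^ k * rodriguesStep^[j] p) = 0 := by
  induction j with
  | zero => simpa using horth
  | succ j ih =>
    rintro (_ | k) hk
    · rw [Function.iterate_succ_apply', pow_zero, one_mul, weightFunctional_rodriguesStep]
    · rw [Function.iterate_succ_apply', weightFunctional_X_pow_succ_mul_rodriguesStep,
        ih k (by omega), mul_zero]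

theorem stmt5_general (m n : ℕ) (p : Polynomial ℂ)
    (horth : ∀ k : ℕ, k < m →
      I0 (fun x => x ^ k * p.eval x * Complex.exp (-x ^ 3)) +
        I2 (fun x => x ^ k * p.eval x * Complex.exp (-x ^ 3)) = 0) :
    ∀ k : ℕ, k < n + m →
      I0 (fun x => x ^ k * Q n p x * Complex.exp (-x ^ 3)) +
        I2 (fun x => x ^ k * Q n p x * Complex.exp (-x ^ 3)) = 0 := by
  have horth' : ∀ k < m, weightFunctional (X ^ k * p) = 0 := fun k hk => by
    simpa only [weightFunctional_apply, eval_mul, eval_pow, eval_X, mul_comm, mul_left_comm]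
      using horth k hk
  intro k hk
  have hQ : (fun x => x ^ k * Q n p x * Complex.exp (-x ^ 3)) = fun x =>
      Complex.exp (-x ^ 3) *
        (((-1) ^ n / 3 ^ n : ℂ) • (X ^ k * rodriguesStep^[n] p)).eval x := by
    funext x
    simp only [Q_eq_eval_rodriguesStep_iterate, eval_smul, eval_mul, eval_pow, eval_X, smul_eq_mul]
    ring
  rw [hQ, ← weightFunctional_apply, map_smul,
    weightFunctional_X_pow_mul_rodriguesStep_iterate horth' n k hk, smul_zero]

/-- **Rodrigues formula, orthogonality on `Γ₀ ∪ Γ₂`.** If `p` is a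
monic polynomial of degree `m` orthogonal to `xᵏ`, `k = 0,…,m−1`, for the weight
`e^{−x³}` on `Γ₀ ∪ Γ₂`, then `Qₙ[p]` is orthogonal to `xᵏ`, `k = 0,…,n+m−1`, for
the weight `e^{−x³}` on `Γ₀ ∪ Γ₂`. -/
theorem stmt5 (m n : ℕ) (p : Polynomial ℂ) (hmonic : p.Monic) (hdeg : p.natDegree = m)
    (horth : ∀ k : ℕ, k < m →
      I0 (fun x => x ^ k * p.eval x * Complex.exp (-x ^ 3)) +
        I2 (fun x => x ^ k * p.eval x * Complex.exp (-x ^ 3)) = 0) :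
    ∀ k : ℕ, k < n + m →
      I0 (fun x => x ^ k * Q n p x * Complex.exp (-x ^ 3)) +
        I2 (fun x => x ^ k * Q n p x * Complex.exp (-x ^ 3)) = 0 :=
  stmt5_general m n p horth
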